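/- arXiv:1611.02994 — 2 statements merged into one kernel-verified Lean document; each statement's English description precedes it below -/
import Mathlib

section
/- Let (E_i)_{i∈I} be a family of nontrivial (i.e., E_i ≠ {0}) Hausdorff real locally convex spaces indexed by an uncountable set I, and let E = ⊕_{i∈I} E_i be their direct sum (elements of the product with only finitely many nonzero coordinates), equipped with the subspace topology induced by the box topology on the product ∏_{i∈I} E_i. Then E is not an Ascoli space. -/
/-!
Compact subsets of the box direct sum `⨁ i, E i` have all their supports inside one finite set
of indices. In each `E i` choose nonzero points `y i n → 0` and continuous `h i n : E i → [0, 1]`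
vanishing near `0` with `h i n (y i n) = 1`. The functions
`g n x = min 1 ((∑ᶠ i, h i n (x i)) / (n + 1))` are continuous, since the sum is locally finite,
and tend to `0` uniformly on compact sets, so on an Ascoli space they would be equicontinuous
at `0`. But a box neighbourhood `∏ U i` of `0` contains `y i n` for all `n ≥ N i`; as `I` is
uncountable some value `n` is taken by infinitely many `N i`, and adding `y i n` over `n + 1`
of these indices gives a point of the neighbourhood where `g n = 1`, while `g n 0 = 0`.
-/

open Set Topology DirectSum

/-- A topological space `Y` is Ascoli if every compact subset of `C(Y,ℝ)` (with the
compact-open topology) is equicontinuous. -/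
def IsAscoli (Y : Type*) [TopologicalSpace Y] : Prop :=
  ∀ K : Set C(Y, ℝ), IsCompact K → Equicontinuous fun f : K => ((f : C(Y, ℝ)) : Y → ℝ)

/-- The box topology on a product of topological spaces. -/
def boxTopology {I : Type*} (G : I → Type*) [∀ i, TopologicalSpace (G i)] :
    TopologicalSpace (∀ i, G i) :=
  TopologicalSpace.generateFrom
    {S | ∃ U : ∀ i, Set (G i), (∀ i, IsOpen (U i)) ∧ S = Set.pi Set.univ U}

open Filter

theorem exists_infinite_preimage_singleton_of_uncountable {α β : Type*} [Uncountable α]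
    [Countable β] (f : α → β) : ∃ b, (f ⁻¹' {b}).Infinite := by
  by_contra! h
  exact not_countable (Countable.of_preimage_singleton fun b => (h b).countable)

instance IsTopologicalAddGroup.toCompletelyRegularSpace {G : Type*} [TopologicalSpace G]
    [AddGroup G] [IsTopologicalAddGroup G] : CompletelyRegularSpace G :=
  letI := IsTopologicalAddGroup.rightUniformSpace G
  inferInstance

theorem exists_continuous_eventuallyEq_zero_eq_one {X : Type*} [TopologicalSpace X]
    [CompletelyRegularSpace X] [T1Space X] {a b : X} (hab : a ≠ b) :
    ∃ f : X → ℝ, Continuous f ∧ (∀ x, f x ∈ Icc 0 1) ∧ f =ᶠ[𝓝 a] 0 ∧ f b = 1 := by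
  obtain ⟨N, hN, hN_closed, hN_sub⟩ :=
    exists_mem_nhds_isClosed_subset (isOpen_compl_singleton.mem_nhds hab)
  obtain ⟨f, hf, hfb, hfN⟩ :=
    CompletelyRegularSpace.completely_regular b N hN_closed fun hb => hN_sub hb rfl
  refine ⟨fun x => unitInterval.symm (f x), continuous_subtype_val.comp
    (unitInterval.continuous_symm.comp hf), fun x => (unitInterval.symm (f x)).2,
    eventually_of_mem hN fun x hx => ?_, by simp [hfb]⟩
  simp [hfN hx]

section BoxTopology

variable {I : Type*} {G : I → Type*} [∀ i, TopologicalSpace (G i)]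

theorem isTopologicalBasis_boxTopology :
    @TopologicalSpace.IsTopologicalBasis _ (boxTopology G)
      {S | ∃ U : ∀ i, Set (G i), (∀ i, IsOpen (U i)) ∧ S = univ.pi U} := by
  refine @TopologicalSpace.IsTopologicalBasis.mk _ (boxTopology G) _ ?_ ?_ rfl
  · rintro _ ⟨U, hU, rfl⟩ _ ⟨V, hV, rfl⟩ x hx
    exact ⟨_, ⟨fun i => U i ∩ V i, fun i => (hU i).inter (hV i), rfl⟩,
      by rwa [pi_inter_distrib], pi_inter_distrib.le⟩
  · exact sUnion_eq_univ_iff.2 fun x =>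
      ⟨univ, ⟨fun _ => univ, fun _ => isOpen_univ, (pi_univ _).symm⟩, mem_univ x⟩

theorem isOpen_pi_boxTopology {U : ∀ i, Set (G i)} (hU : ∀ i, IsOpen (U i)) :
    IsOpen[boxTopology G] (univ.pi U) :=
  TopologicalSpace.GenerateOpen.basic _ ⟨U, hU, rfl⟩

theorem continuous_apply_boxTopology (i : I) :
    Continuous[boxTopology G, _] fun x : ∀ i, G i => x i := by
  classical
  refine continuous_def.2 fun s hs => ?_
  rw [show (fun x : ∀ i, G i => x i) ⁻¹' s = _ from eval_preimage]
  refine isOpen_pi_boxTopology fun j => ?_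
  rcases eq_or_ne j i with rfl | hj
  · simpa using hs
  · simp [hj]

end BoxTopology

section DirectSum

variable {I : Type*} {E : I → Type*} [∀ i, AddCommMonoid (E i)]

theorem finsum_apply_eq_sum {h : ∀ i, E i → ℝ} {x : ⨁ i, E i} {F : Finset I}
    (h0 : ∀ i, h i 0 = 0) (hx : ∀ i ∉ F, x i = 0) : ∑ᶠ i, h i (x i) = ∑ i ∈ F, h i (x i) :=
  finsum_eq_sum_of_support_subset _ fun i hi =>
    by_contra fun hiF => hi (by simp only [hx i hiF, h0])

variable [∀ i, TopologicalSpace (E i)]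

variable (E) in
abbrev directSumBoxTopology : TopologicalSpace (⨁ i, E i) :=
  (boxTopology E).induced fun x i => x i

attribute [local instance] directSumBoxTopology

theorem isOpen_setOf_forall_apply_mem {V : ∀ i, Set (E i)} (hV : ∀ i, IsOpen (V i)) :
    IsOpen {x : ⨁ i, E i | ∀ i, x i ∈ V i} := by
  simpa [preimage, Set.pi] using
    @isOpen_induced _ _ (boxTopology E) (fun x : ⨁ i, E i => fun i => x i) _
      (isOpen_pi_boxTopology hV)

theorem continuous_directSum_apply (i : I) : Continuous fun x : ⨁ i, E i => x i :=
  @Continuous.comp _ _ _ _ (boxTopology E) _ _ _ (continuous_apply_boxTopology i)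
    continuous_induced_dom

theorem exists_forall_apply_mem_subset_of_mem_nhds {x₀ : ⨁ i, E i} {s : Set (⨁ i, E i)}
    (hs : s ∈ 𝓝 x₀) : ∃ U : ∀ i, Set (E i),
      (∀ i, IsOpen (U i)) ∧ (∀ i, x₀ i ∈ U i) ∧ {x | ∀ i, x i ∈ U i} ⊆ s := by
  rw [@nhds_induced _ _ (boxTopology E)] at hs
  obtain ⟨t, ht, hts⟩ := mem_comap.1 hs
  obtain ⟨_, ⟨U, hU, rfl⟩, hx₀U, hUt⟩ :=
    (@TopologicalSpace.IsTopologicalBasis.mem_nhds_iff _ (boxTopology E) _ _ _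
      isTopologicalBasis_boxTopology).1 ht
  exact ⟨U, hU, fun i => hx₀U i (mem_univ i), fun x hx => hts (hUt fun i _ => hx i)⟩

theorem IsCompact.exists_finset_forall_apply_mem {C : Set (⨁ i, E i)} (hC : IsCompact C)
    {V : ∀ i, Set (E i)} (hV : ∀ i, IsOpen (V i)) (hV0 : ∀ i, 0 ∈ V i) :
    ∃ F : Finset I, ∀ x ∈ C, ∀ i ∉ F, x i ∈ V i := by
  classical
  obtain ⟨F, hF⟩ := hC.elim_directed_cover
    (fun F : Finset I => {x : ⨁ i, E i | ∀ i, i ∈ F ∨ x i ∈ V i})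
    (fun F => isOpen_setOf_forall_apply_mem fun i => isOpen_const.union (hV i))
    (fun x _ => mem_iUnion.2 ⟨x.support, fun i => or_iff_not_imp_left.2 fun hi =>
      (DFinsupp.notMem_support_iff.1 hi) ▸ hV0 i⟩)
    (Monotone.directed_le fun F F' hFF' x hx i =>
      (hx i).imp_left fun hi => Finset.mem_of_subset hFF' hi)
  exact ⟨F, fun x hx i hi => (hF hx i).resolve_left hi⟩

theorem IsCompact.exists_finset_forall_apply_eq_zero [∀ i, T1Space (E i)]
    {C : Set (⨁ i, E i)} (hC : IsCompact C) : ∃ F : Finset I, ∀ x ∈ C, ∀ i ∉ F, x i = 0 := by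
  have : ∀ i, ∃ V : Set (E i), IsOpen V ∧ 0 ∈ V ∧ ((∃ x ∈ C, x i ≠ 0) → ∃ x ∈ C, x i ∉ V) := by
    intro i
    by_cases h : ∃ x ∈ C, x i ≠ 0
    · obtain ⟨x, hx, hxi⟩ := h
      exact ⟨{x i}ᶜ, isOpen_compl_singleton, hxi.symm, fun _ => ⟨x, hx, not_not_intro rfl⟩⟩
    · exact ⟨univ, isOpen_univ, mem_univ 0, fun h' => absurd h' h⟩
  choose V hV hV0 hVC using this
  obtain ⟨F, hF⟩ := hC.exists_finset_forall_apply_mem hV hV0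
  refine ⟨F, fun x hx i hi => by_contra fun hxi => ?_⟩
  obtain ⟨y, hy, hyi⟩ := hVC i ⟨x, hx, hxi⟩
  exact hyi (hF y hy i hi)

theorem continuous_finsum_apply {h : ∀ i, E i → ℝ} (hc : ∀ i, Continuous (h i))
    (h0 : ∀ i, h i =ᶠ[𝓝 0] 0) :
    Continuous fun x : ⨁ i, E i => ∑ᶠ i, h i (x i) := by
  refine continuous_finsum (fun i => (hc i).comp (continuous_directSum_apply i)) fun x₀ => ?_
  refine ⟨{x | ∀ i, x₀ i ≠ 0 ∨ x i ∈ interior {y | h i y = 0}},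
    (isOpen_setOf_forall_apply_mem fun i => isOpen_const.union isOpen_interior).mem_nhds
      fun i => ?_, ?_⟩
  · refine or_iff_not_imp_left.2 fun hi => ?_
    rw [not_not.1 hi]
    exact mem_interior_iff_mem_nhds.2 (h0 i)
  · refine (DFinsupp.finite_support x₀).subset ?_
    rintro i ⟨x, hxi, hxW⟩
    exact fun hi =>
      hxi (interior_subset (s := {y | h i y = 0}) ((hxW i).resolve_left (not_not.2 hi)))

theorem tendsto_zero_of_abs_le_card_div [∀ i, T1Space (E i)] {f : ℕ → C(⨁ i, E i, ℝ)}
    (hf : ∀ n x (F : Finset I), (∀ i ∉ F, x i = 0) → |f n x| ≤ F.card / (n + 1)) :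
    Tendsto f atTop (𝓝 0) := by
  refine ContinuousMap.tendsto_iff_forall_isCompact_tendstoUniformlyOn.2 fun C hC => ?_
  obtain ⟨F, hF⟩ := hC.exists_finset_forall_apply_eq_zero
  have hlim : Tendsto (fun n : ℕ => (F.card : ℝ) / (n + 1)) atTop (𝓝 0) := by
    simpa only [mul_one_div, mul_zero] using
      tendsto_one_div_add_atTop_nhds_zero_nat.const_mul (F.card : ℝ)
  refine Metric.tendstoUniformlyOn_iff.2 fun ε hε => ?_
  filter_upwards [hlim.eventually (gt_mem_nhds hε)] with n hn x hx
  rw [ContinuousMap.zero_apply, dist_zero_left, Real.norm_eq_abs]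
  exact (hf n x F (hF x hx)).trans_lt hn

theorem IsAscoli.equicontinuous_of_tendsto {Y : Type*} [TopologicalSpace Y] (hY : IsAscoli Y)
    {f : ℕ → C(Y, ℝ)} {f₀ : C(Y, ℝ)} (hf : Tendsto f atTop (𝓝 f₀)) :
    Equicontinuous fun n => ⇑(f n) :=
  (hY _ hf.isCompact_insert_range).comp fun n => ⟨f n, mem_insert_of_mem _ (mem_range_self n)⟩

theorem exists_forall_apply_mem_of_tendsto [Uncountable I] {y : ∀ i, ℕ → E i}
    (hy : ∀ i, Tendsto (y i) atTop (𝓝 0)) {U : ∀ i, Set (E i)} (hU : ∀ i, U i ∈ 𝓝 0) :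
    ∃ (n : ℕ) (T : Finset I) (x : ⨁ i, E i), T.card = n + 1 ∧ (∀ i, x i ∈ U i) ∧
      (∀ i ∈ T, x i = y i n) ∧ ∀ i ∉ T, x i = 0 := by
  classical
  choose N hN using fun i => eventually_atTop.1 ((hy i).eventually (hU i))
  obtain ⟨n, hn⟩ := exists_infinite_preimage_singleton_of_uncountable N
  obtain ⟨T, hTN, hT⟩ := hn.exists_subset_card_eq (n + 1)
  refine ⟨n, T, DFinsupp.mk T fun i => y i n, hT, fun i => ?_,
    fun i hi => by simp [DFinsupp.mk_apply, hi], fun i hi => by simp [DFinsupp.mk_apply, hi]⟩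
  rw [DFinsupp.mk_apply]
  split_ifs with hi
  exacts [hN i n (hTN hi).le, mem_of_mem_nhds (hU i)]

theorem not_isAscoli_directSum [Uncountable I] [∀ i, T1Space (E i)]
    [∀ i, CompletelyRegularSpace (E i)]
    (hE : ∀ i, ∃ y : ℕ → E i, Tendsto y atTop (𝓝 0) ∧ ∀ n, y n ≠ 0) :
    ¬ IsAscoli (⨁ i, E i) := by
  classical
  intro hA
  choose y hy_lim hy_ne using hE
  choose h hh_cont hh_mem hh_zero hh_one using fun i n =>
    exists_continuous_eventuallyEq_zero_eq_one (hy_ne i n).symm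
  have hh0 : ∀ n i, h i n 0 = 0 := fun n i => (hh_zero i n).eq_of_nhds
  let g : ℕ → C(⨁ i, E i, ℝ) := fun n =>
    ⟨fun x => min 1 ((∑ᶠ i, h i n (x i)) / (n + 1)), continuous_const.min
      ((continuous_finsum_apply (fun i => hh_cont i n) fun i => hh_zero i n).div_const _)⟩
  have hg_lim : Tendsto g atTop (𝓝 0) := tendsto_zero_of_abs_le_card_div fun n x F hx => by
    have hsum : 0 ≤ ∑ᶠ i, h i n (x i) := finsum_nonneg fun i => (hh_mem i n _).1
    rw [abs_of_nonneg (show 0 ≤ g n x from le_min zero_le_one (div_nonneg hsum (by positivity)))]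
    refine (min_le_right _ _).trans (div_le_div_of_nonneg_right ?_ (by positivity))
    rw [finsum_apply_eq_sum (hh0 n) hx]
    simpa using Finset.sum_le_card_nsmul F _ 1 fun i _ => (hh_mem i n _).2
  obtain ⟨U, hU_open, hU0, hU⟩ := exists_forall_apply_mem_subset_of_mem_nhds
    (Metric.equicontinuousAt_iff_right.1 (hA.equicontinuous_of_tendsto hg_lim 0) 1 one_pos)
  obtain ⟨n, T, x, hT, hxU, hxT, hx0⟩ := exists_forall_apply_mem_of_tendsto hy_lim
    fun i => (hU_open i).mem_nhds (by simpa using hU0 i)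
  have hgx : g n x = 1 := by
    have hsum : ∑ᶠ i, h i n (x i) = n + 1 := by
      rw [finsum_apply_eq_sum (hh0 n) hx0,
        Finset.sum_congr rfl fun i hi => by rw [hxT i hi, hh_one]]
      simp [hT]
    simp [g, hsum, div_self (Nat.cast_add_one_ne_zero (R := ℝ) n)]
  simpa [g, hh0, hgx] using hU hxU n

end DirectSum

theorem statement15_general {I : Type*} [Uncountable I] (E : I → Type*) [∀ i, AddCommGroup (E i)]
    [∀ i, Module ℝ (E i)] [∀ i, TopologicalSpace (E i)] [∀ i, IsTopologicalAddGroup (E i)]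
    [∀ i, ContinuousSMul ℝ (E i)] [∀ i, T2Space (E i)]
    [∀ i, Nontrivial (E i)] :
    ¬ @IsAscoli (⨁ i, E i)
      (TopologicalSpace.induced (fun v : ⨁ i, E i => (fun i => v i : ∀ i, E i))
        (boxTopology E)) := by
  refine not_isAscoli_directSum fun i => ?_
  obtain ⟨v, hv⟩ := exists_ne (0 : E i)
  refine ⟨fun n => (1 / ((n : ℝ) + 1)) • v, ?_, fun n => smul_ne_zero (by positivity) hv⟩
  simpa using (tendsto_one_div_add_atTop_nhds_zero_nat (𝕜 := ℝ)).smul_const v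

/-- The direct sum of an uncountable family of nontrivial Hausdorff real locally convex
spaces, equipped with the subspace topology induced by the box topology on the product,
is not an Ascoli space. -/
theorem statement15 {I : Type*} [Uncountable I] (E : I → Type*) [∀ i, AddCommGroup (E i)]
    [∀ i, Module ℝ (E i)] [∀ i, TopologicalSpace (E i)] [∀ i, IsTopologicalAddGroup (E i)]
    [∀ i, ContinuousSMul ℝ (E i)] [∀ i, LocallyConvexSpace ℝ (E i)] [∀ i, T2Space (E i)]
    [∀ i, Nontrivial (E i)] :
    ¬ @IsAscoli (⨁ i, E i)
      (TopologicalSpace.induced (fun v : ⨁ i, E i => (fun i => v i : ∀ i, E i))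
        (boxTopology E)) :=
  statement15_general E
end

section
/- Let X be a completely regular Hausdorff space and let C_k(X) denote the space C(X,ℝ) of continuous real-valued functions with the compact-open topology (a real topological vector space). Then the compact-open topology on C(X,ℝ) coincides with the weak topology σ(C(X,ℝ), C_k(X)′) — equivalently, the canonical identity map from C_k(X) to C_k(X) equipped with its weak topology (in Mathlib, WeakSpace ℝ C_k(X)) is a homeomorphism — if and only if every compact subset of X is finite. In that case the compact-open topology also coincides with the topology of pointwise convergence on C(X,ℝ). -/
/-!
If every compact set is finite, the compact-open topology is the topology of pointwise
convergence, whose defining evaluations are continuous linear functionals, so it is coarser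
than the weak topology. Conversely, if the weak topology is the compact-open one, the
neighbourhood `{f | f(K) ⊆ (-1, 1)}` of `0` contains the common kernel of finitely many
functionals `L₁, …, Lₙ`; this kernel is a subspace, so its elements vanish on `K`, and every
evaluation `δₓ` with `x ∈ K` lies in the span of the `Lᵢ`. Evaluations at distinct points are
linearly independent on a completely regular T₁ space, hence `K` has at most `n` points.
-/

open Set Topology

theorem ContinuousMap.compactOpen_eq_induced_coeFn {X Y : Type*} [TopologicalSpace X]
    [TopologicalSpace Y] (hX : ∀ K : Set X, IsCompact K → K.Finite) :
    (ContinuousMap.compactOpen : TopologicalSpace C(X, Y)) =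
      TopologicalSpace.induced (fun f : C(X, Y) => (f : X → Y)) Pi.topologicalSpace := by
  refine le_antisymm (continuous_iff_le_induced.mp continuous_coeFun) ?_
  rw [ContinuousMap.compactOpen_eq]
  refine le_generateFrom ?_
  rintro _ ⟨K, hK, U, hU, rfl⟩
  convert isOpen_induced (isOpen_set_pi (hX K hK) fun _ _ => hU) using 1
  ext f
  simp [MapsTo, Set.mem_pi]

theorem CompletelyRegularSpace.exists_continuousMap_eq_one_eqOn_zero {X : Type*}
    [TopologicalSpace X] [CompletelyRegularSpace X] {x : X} {F : Set X} (hF : IsClosed F)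
    (hx : x ∉ F) : ∃ φ : C(X, ℝ), φ x = 1 ∧ EqOn φ 0 F := by
  obtain ⟨f, hf, hfx, hfF⟩ := CompletelyRegularSpace.completely_regular x F hF hx
  refine ⟨⟨fun y => 1 - (f y : ℝ), by fun_prop⟩, by simp [hfx], fun y hy => ?_⟩
  simp [hfF hy]

theorem ContinuousMap.linearIndependent_evalCLM {X : Type*} [TopologicalSpace X]
    [CompletelyRegularSpace X] [T1Space X] :
    LinearIndependent ℝ fun x : X =>
      ((ContinuousMap.evalCLM ℝ x : C(X, ℝ) →L[ℝ] ℝ) : C(X, ℝ) →ₗ[ℝ] ℝ) := by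
  classical
  refine linearIndependent_iff'.mpr fun s c hsum i hi => ?_
  obtain ⟨φ, hφi, hφ⟩ := CompletelyRegularSpace.exists_continuousMap_eq_one_eqOn_zero
    (s.erase i).finite_toSet.isClosed (Finset.notMem_erase i s ∘ Finset.mem_coe.mp)
  have := LinearMap.congr_fun hsum φ
  simp only [LinearMap.sum_apply, LinearMap.smul_apply, LinearMap.zero_apply] at this
  rw [Finset.sum_eq_single_of_mem i hi fun j hj hji => by
    simp [hφ (Finset.mem_erase.mpr ⟨hji, hj⟩)]] at this
  simpa [hφi] using this

theorem exists_finset_forall_apply_eq_zero_imp_mem_of_mem_nhds {𝕜 E : Type*} [NormedField 𝕜]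
    [AddCommGroup E] [Module 𝕜 E] [TopologicalSpace E]
    (h : IsOpenMap (toWeakSpace 𝕜 E)) {U : Set E} (hU : U ∈ 𝓝 0) :
    ∃ s : Finset (E →L[𝕜] 𝕜), ∀ x, (∀ L ∈ s, L x = 0) → x ∈ U := by
  have hU' : toWeakSpace 𝕜 E '' U ∈ 𝓝 (0 : WeakSpace 𝕜 E) := by
    simpa using h.image_mem_nhds hU
  obtain ⟨V, hV, hVU⟩ := ((topDualPairing 𝕜 E).flip.hasBasis_weakBilin).mem_iff.mp hU'
  obtain ⟨s, r, hr, rfl⟩ := (SeminormFamily.basisSets_iff _).mp hV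
  refine ⟨s, fun x hx => ?_⟩
  have hxV : x ∈ (s.sup (topDualPairing 𝕜 E).flip.toSeminormFamily).ball 0 r := by
    rw [Seminorm.mem_ball_zero]
    exact Seminorm.finset_sup_apply_lt hr fun L hL => by simpa [hx L hL] using hr
  obtain ⟨y, hy, hyx⟩ := hVU hxV
  rwa [(toWeakSpace 𝕜 E).injective hyx] at hy

theorem isHomeomorph_toWeakSpace_of_isCompact_finite {𝕜 X : Type*} [NormedField 𝕜]
    [TopologicalSpace X] (hX : ∀ K : Set X, IsCompact K → K.Finite) :
    IsHomeomorph (toWeakSpace 𝕜 C(X, 𝕜)) := by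
  have hcoe : IsInducing fun f : C(X, 𝕜) => (f : X → 𝕜) :=
    ⟨ContinuousMap.compactOpen_eq_induced_coeFn hX⟩
  refine (toWeakSpace 𝕜 C(X, 𝕜)).toEquiv.isHomeomorph_iff.mpr
    ⟨(toWeakSpaceCLM 𝕜 C(X, 𝕜)).continuous, hcoe.continuous_iff.mpr ?_⟩
  exact continuous_pi fun x => WeakBilin.eval_continuous _ (ContinuousMap.evalCLM 𝕜 x)

theorem IsCompact.finite_of_isOpenMap_toWeakSpace {X : Type*} [TopologicalSpace X]
    [CompletelyRegularSpace X] [T1Space X] (h : IsOpenMap (toWeakSpace ℝ C(X, ℝ)))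
    {K : Set X} (hK : IsCompact K) : K.Finite := by
  have hV : {f : C(X, ℝ) | MapsTo f K (Metric.ball 0 1)} ∈ 𝓝 0 :=
    (ContinuousMap.isOpen_setOfPred_mapsTo hK Metric.isOpen_ball).mem_nhds fun x _ => by simp
  obtain ⟨s, hs⟩ := exists_finset_forall_apply_eq_zero_imp_mem_of_mem_nhds h hV
  let ev (x : X) : C(X, ℝ) →ₗ[ℝ] ℝ := (ContinuousMap.evalCLM ℝ x : C(X, ℝ) →L[ℝ] ℝ)
  -- the common kernel of `s` is a subspace, so rescaling shows it vanishes on `K`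
  have hker (x : X) (hx : x ∈ K) :
      ⨅ L : s, LinearMap.ker (L : C(X, ℝ) →ₗ[ℝ] ℝ) ≤ LinearMap.ker (ev x) := by
    intro f hf
    simp only [Submodule.mem_iInf, LinearMap.mem_ker, Subtype.forall,
      ContinuousLinearMap.coe_coe] at hf
    by_contra hfx
    replace hfx : f x ≠ 0 := hfx
    have := hs ((f x)⁻¹ • f) (fun L hL => by simp [hf L hL]) hx
    simp [hfx] at this
  have hspan : range (fun x : K => ev x) ≤
      Submodule.span ℝ (range fun L : s => (L : C(X, ℝ) →ₗ[ℝ] ℝ)) := by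
    rintro _ ⟨x, rfl⟩
    exact mem_span_of_iInf_ker_le_ker (hker x x.2)
  have : Finite K := (ContinuousMap.linearIndependent_evalCLM.comp _
    Subtype.val_injective).finite_of_le_span_finite _ _ hspan
  exact K.toFinite

/-- For a completely regular Hausdorff space `X`, the compact-open topology on `C(X,ℝ)`
coincides with the weak topology `σ(C(X,ℝ), C_k(X)′)` (i.e. the canonical identity map from
`C_k(X)` to `C_k(X)` with its weak topology is a homeomorphism) if and only if every compact
subset of `X` is finite; in that case the compact-open topology also coincides with the
topology of pointwise convergence. -/
theorem statement19 {X : Type*} [TopologicalSpace X] [CompletelyRegularSpace X] [T2Space X] :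
    ((IsHomeomorph (⇑(toWeakSpace ℝ C(X, ℝ)))) ↔
      ∀ K : Set X, IsCompact K → K.Finite) ∧
    ((∀ K : Set X, IsCompact K → K.Finite) →
      (ContinuousMap.compactOpen : TopologicalSpace C(X, ℝ)) =
        TopologicalSpace.induced (fun f : C(X, ℝ) => (f : X → ℝ)) Pi.topologicalSpace) :=
  ⟨⟨fun h _ hK => hK.finite_of_isOpenMap_toWeakSpace h.isOpenMap,
    isHomeomorph_toWeakSpace_of_isCompact_finite⟩, ContinuousMap.compactOpen_eq_induced_coeFn⟩
end
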